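/- Assume the normalization ‖m'‖_{L∞(0,1)} + ‖m''‖_{L∞(0,1)} + max_{[0,1]} c − min_{[0,1]} c ≤ 1/2. Then there exists a constant M > 0 such that for every s ≥ 1 and every principal eigenfunction w(s,·) as in the context, max_{x ∈ [0,1]} w(s,x) ≤ M s^{1/2}. -/

import Mathlib

/-!
Testing the Rayleigh quotient with constants gives `λ₁ᴺ(s) ≤ max c`. Multiplying the equation by
`w` and integrating by parts, `∫ w'² = [w w']₀¹ + λ₁ᴺ(s) - ∫ (s² m'² + s m'' + c) w²`, and the
boundary conditions turn `[w w']₀¹` into `s (m'(1) w(1)² - m'(0) w(0)²)`; hence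
`∫ w'² ≤ C (s max w² + s)`. Since `∫ w² = 1`, `w² ≤ 1` somewhere, so
`max w² ≤ 1 + ∫ |2 w w'| ≤ 1 + 2 (∫ w'²)^{1/2}`. Together these give `∫ w'² = O(s²)` and then
`max w² = O(s)`, with constants depending only on the sup norms of `m'`, `m''` and `c` on `[0,1]`.
-/

open MeasureTheory Filter Set

/-- The Neumann principal eigenvalue of `-φ'' - 2 s m' φ' + c φ = λ φ` on `(0,1)`,
via its variational characterization. -/
noncomputable def lambdaN (m c : ℝ → ℝ) (s : ℝ) : ℝ :=
  sInf {l : ℝ | ∃ φ : ℝ → ℝ, ContDiff ℝ 1 φ ∧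
    (∫ x in (0:ℝ)..1, Real.exp (2 * s * m x) * (φ x) ^ 2) = 1 ∧
    l = ∫ x in (0:ℝ)..1, Real.exp (2 * s * m x) * ((deriv φ x) ^ 2 + c x * (φ x) ^ 2)}

/-- `v` is a positive, `L²`-normalized principal eigenfunction (in the transformed
variable `w = e^{s m} φ`) associated with the eigenvalue `lam` and parameter `s`. -/
def IsPrincipalEigenfunction (m c : ℝ → ℝ) (lam s : ℝ) (v : ℝ → ℝ) : Prop :=
  ContDiff ℝ 2 v ∧ (∀ x ∈ Set.Icc (0:ℝ) 1, 0 < v x) ∧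
  (∀ x ∈ Set.Ioo (0:ℝ) 1,
    -(deriv (deriv v) x) + (s ^ 2 * (deriv m x) ^ 2 + s * deriv (deriv m) x + c x) * v x
      = lam * v x) ∧
  deriv v 0 = s * v 0 * deriv m 0 ∧ deriv v 1 = s * v 1 * deriv m 1 ∧
  (∫ x in (0:ℝ)..1, (v x) ^ 2) = 1

lemma le_integral_mul_of_le {ρ q : ℝ → ℝ} {a : ℝ} (hρ : Continuous ρ) (hq : Continuous q)
    (hρ0 : ∀ x, 0 ≤ ρ x) (hρ1 : ∫ x in (0:ℝ)..1, ρ x = 1)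
    (hqa : ∀ x ∈ Icc (0:ℝ) 1, a ≤ q x) :
    a ≤ ∫ x in (0:ℝ)..1, q x * ρ x :=
  calc a = ∫ x in (0:ℝ)..1, a * ρ x := by
        rw [intervalIntegral.integral_const_mul, hρ1, mul_one]
    _ ≤ ∫ x in (0:ℝ)..1, q x * ρ x :=
      intervalIntegral.integral_mono_on zero_le_one
        ((continuous_const.mul hρ).intervalIntegrable _ _) ((hq.mul hρ).intervalIntegrable _ _)
        fun x hx => mul_le_mul_of_nonneg_right (hqa x hx) (hρ0 x)

lemma integral_mul_le_of_le {ρ q : ℝ → ℝ} {a : ℝ} (hρ : Continuous ρ) (hq : Continuous q)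
    (hρ0 : ∀ x, 0 ≤ ρ x) (hρ1 : ∫ x in (0:ℝ)..1, ρ x = 1)
    (hqa : ∀ x ∈ Icc (0:ℝ) 1, q x ≤ a) :
    ∫ x in (0:ℝ)..1, q x * ρ x ≤ a := by
  have := le_integral_mul_of_le (q := fun x => -q x) hρ hq.neg hρ0 hρ1 fun x hx =>
    neg_le_neg (hqa x hx)
  simp only [neg_mul, intervalIntegral.integral_neg] at this
  linarith

lemma le_rayleigh_of_le {m c φ : ℝ → ℝ} {s a : ℝ} (hm : Continuous m) (hc : Continuous c)
    (hφ : ContDiff ℝ 1 φ) (hφ1 : ∫ x in (0:ℝ)..1, Real.exp (2 * s * m x) * φ x ^ 2 = 1)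
    (hca : ∀ x ∈ Icc (0:ℝ) 1, a ≤ c x) :
    a ≤ ∫ x in (0:ℝ)..1, Real.exp (2 * s * m x) * (deriv φ x ^ 2 + c x * φ x ^ 2) := by
  have hφ' : Continuous (deriv φ) := hφ.continuous_deriv le_rfl
  have hφ0 : Continuous φ := hφ.continuous
  calc a ≤ ∫ x in (0:ℝ)..1, c x * (Real.exp (2 * s * m x) * φ x ^ 2) :=
        le_integral_mul_of_le (by fun_prop) hc (fun x => by positivity) hφ1 hca
    _ ≤ _ := intervalIntegral.integral_mono_on zero_le_one
        (Continuous.intervalIntegrable (by fun_prop) _ _)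
        (Continuous.intervalIntegrable (by fun_prop) _ _) fun x _ => by
        nlinarith [Real.exp_pos (2 * s * m x), sq_nonneg (deriv φ x)]

lemma lambdaN_le_of_forall_le {m c : ℝ → ℝ} (hm : Continuous m) (hc : Continuous c) (s : ℝ)
    {C : ℝ} (hC : ∀ x ∈ Icc (0:ℝ) 1, c x ≤ C) : lambdaN m c s ≤ C := by
  obtain ⟨cmin, hcmin⟩ := ((isCompact_Icc (a := (0:ℝ)) (b := 1)).image hc).bddBelow
  have hρ : Continuous fun x => Real.exp (2 * s * m x) := by fun_prop
  set I := ∫ x in (0:ℝ)..1, Real.exp (2 * s * m x)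
  have hI : 0 < I := intervalIntegral.intervalIntegral_pos_of_pos_on (hρ.intervalIntegrable _ _)
    (fun x _ => Real.exp_pos _) one_pos
  set a := (√I)⁻¹
  have ha : a ^ 2 = I⁻¹ := by rw [inv_pow, Real.sq_sqrt hI.le]
  have ha1 : ∫ x in (0:ℝ)..1, Real.exp (2 * s * m x) * a ^ 2 = 1 := by
    rw [intervalIntegral.integral_mul_const, ha, mul_inv_cancel₀ hI.ne']
  unfold lambdaN
  refine csInf_le_of_le ⟨cmin, ?_⟩ ⟨fun _ => a, contDiff_const, ha1, rfl⟩ ?_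
  · rintro l ⟨φ, hφ, hφ1, rfl⟩
    exact le_rayleigh_of_le hm hc hφ hφ1 fun x hx => hcmin ⟨x, hx, rfl⟩
  · simp only [deriv_const', zero_pow two_ne_zero, zero_add]
    calc _ = ∫ x in (0:ℝ)..1, c x * (Real.exp (2 * s * m x) * a ^ 2) := by
          congr 1; ext x; ring
      _ ≤ C := integral_mul_le_of_le (by fun_prop) hc (fun x => by positivity) ha1 hC

lemma abs_integral_le_integral_abs_of_mem_Icc {g : ℝ → ℝ} (hg : Continuous g) {a b c d : ℝ}
    (ha : a ∈ Icc c d) (hb : b ∈ Icc c d) :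
    |∫ x in a..b, g x| ≤ ∫ x in c..d, |g x| := by
  wlog hab : a ≤ b generalizing a b
  · rw [intervalIntegral.integral_symm, abs_neg]
    exact this hb ha (le_of_not_ge hab)
  exact (intervalIntegral.abs_integral_le_integral_abs hab).trans <|
    intervalIntegral.integral_mono_interval ha.1 hab hb.2 (.of_forall fun _ => abs_nonneg _)
      (hg.abs.intervalIntegrable _ _)

lemma abs_two_mul_le_mul_sq_add_sq_div (a b : ℝ) {t : ℝ} (ht : 0 < t) :
    |2 * a * b| ≤ t * a ^ 2 + b ^ 2 / t := by
  have h : t * a ^ 2 + b ^ 2 / t - |2 * a * b| = (t * |a| - |b|) ^ 2 / t := by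
    rw [abs_mul, abs_mul, abs_two]
    field_simp
    rw [sub_sq, mul_pow, sq_abs, sq_abs]
    ring
  linarith [div_nonneg (sq_nonneg (t * |a| - |b|)) ht.le]

lemma sq_le_one_add_add_div_of_integral_sq_eq_one {v : ℝ → ℝ} (hv : ContDiff ℝ 1 v)
    (hv1 : ∫ x in (0:ℝ)..1, v x ^ 2 = 1) {t : ℝ} (ht : 0 < t) {x : ℝ} (hx : x ∈ Icc (0:ℝ) 1) :
    v x ^ 2 ≤ 1 + t + (∫ y in (0:ℝ)..1, deriv v y ^ 2) / t := by
  have hvc : Continuous v := hv.continuous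
  have hv'c : Continuous (deriv v) := hv.continuous_deriv le_rfl
  obtain ⟨x₀, hx₀, hmin⟩ := isCompact_Icc.exists_isMinOn (nonempty_Icc.2 zero_le_one)
    (hvc.pow 2).continuousOn
  have hx₀1 : v x₀ ^ 2 ≤ 1 := by
    have := intervalIntegral.integral_mono_on (μ := volume) zero_le_one
      intervalIntegrable_const ((hvc.pow 2).intervalIntegrable 0 1) fun x hx => hmin hx
    simpa [hv1] using this
  have hftc : ∫ y in x₀..x, 2 * v y * deriv v y = v x ^ 2 - v x₀ ^ 2 :=
    intervalIntegral.integral_eq_sub_of_hasDerivAt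
      (fun y _ => by simpa using ((hv.differentiable one_ne_zero y).hasDerivAt).pow 2)
      ((by fun_prop : Continuous fun y => 2 * v y * deriv v y).intervalIntegrable _ _)
  have hyoung : ∫ y in (0:ℝ)..1, |2 * v y * deriv v y|
      ≤ ∫ y in (0:ℝ)..1, (t * v y ^ 2 + deriv v y ^ 2 / t) :=
    intervalIntegral.integral_mono_on zero_le_one
      (Continuous.intervalIntegrable (by fun_prop) _ _)
      (Continuous.intervalIntegrable (by fun_prop) _ _)
      fun y _ => abs_two_mul_le_mul_sq_add_sq_div _ _ ht
  rw [intervalIntegral.integral_add (Continuous.intervalIntegrable (by fun_prop) _ _)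
    (Continuous.intervalIntegrable (by fun_prop) _ _), intervalIntegral.integral_const_mul,
    intervalIntegral.integral_div, hv1, mul_one] at hyoung
  have := abs_integral_le_integral_abs_of_mem_Icc (g := fun y => 2 * v y * deriv v y)
    (by fun_prop) hx₀ hx
  rw [hftc] at this
  linarith [le_abs_self (v x ^ 2 - v x₀ ^ 2)]

lemma sq_le_one_add_two_mul_sqrt_of_integral_sq_eq_one {v : ℝ → ℝ} (hv : ContDiff ℝ 1 v)
    (hv1 : ∫ x in (0:ℝ)..1, v x ^ 2 = 1) {x : ℝ} (hx : x ∈ Icc (0:ℝ) 1) :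
    v x ^ 2 ≤ 1 + 2 * √(∫ y in (0:ℝ)..1, deriv v y ^ 2) := by
  have hE0 : 0 ≤ ∫ y in (0:ℝ)..1, deriv v y ^ 2 :=
    intervalIntegral.integral_nonneg zero_le_one fun y _ => sq_nonneg _
  rcases hE0.eq_or_lt with hE | hE
  · rw [← hE, Real.sqrt_zero, mul_zero, add_zero]
    refine le_of_forall_pos_le_add fun t ht => ?_
    simpa [← hE] using sq_le_one_add_add_div_of_integral_sq_eq_one hv hv1 ht hx
  · have := sq_le_one_add_add_div_of_integral_sq_eq_one hv hv1 (Real.sqrt_pos.2 hE) hx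
    rw [Real.div_sqrt] at this
    linarith

lemma integral_deriv_sq_eq_of_eigen {v q : ℝ → ℝ} {lam : ℝ} (hv : ContDiff ℝ 2 v)
    (hq : Continuous q)
    (hode : ∀ x ∈ Ioo (0:ℝ) 1, -deriv (deriv v) x + q x * v x = lam * v x)
    (hv1 : ∫ x in (0:ℝ)..1, v x ^ 2 = 1) :
    ∫ x in (0:ℝ)..1, deriv v x ^ 2
      = v 1 * deriv v 1 - v 0 * deriv v 0 + lam - ∫ x in (0:ℝ)..1, q x * v x ^ 2 := by
  have hv' : ContDiff ℝ 1 (deriv v) := hv.iterate_deriv' 1 1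
  have hvc : Continuous v := hv.continuous
  have hv'c : Continuous (deriv v) := hv'.continuous
  have hv''c : Continuous (deriv (deriv v)) := hv'.continuous_deriv le_rfl
  have hibp : ∫ x in (0:ℝ)..1, v x * deriv (deriv v) x
      = v 1 * deriv v 1 - v 0 * deriv v 0 - ∫ x in (0:ℝ)..1, deriv v x * deriv v x :=
    intervalIntegral.integral_mul_deriv_eq_deriv_mul
      (fun x _ => ((hv.differentiable two_ne_zero) x).hasDerivAt)
      (fun x _ => ((hv'.differentiable one_ne_zero) x).hasDerivAt)
      (hv'c.intervalIntegrable 0 1) (hv''c.intervalIntegrable 0 1)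
  have hode' : ∫ x in (0:ℝ)..1, v x * deriv (deriv v) x
      = ∫ x in (0:ℝ)..1, (q x * v x ^ 2 - lam * v x ^ 2) := by
    simp only [intervalIntegral.integral_of_le zero_le_one, integral_Ioc_eq_integral_Ioo]
    refine setIntegral_congr_fun measurableSet_Ioo fun x hx => ?_
    linear_combination -v x * hode x hx
  rw [intervalIntegral.integral_sub (Continuous.intervalIntegrable (by fun_prop) _ _)
    (Continuous.intervalIntegrable (by fun_prop) _ _), intervalIntegral.integral_const_mul, hv1,
    hibp] at hode'
  simp only [← sq] at hode'
  linarith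

namespace IsPrincipalEigenfunction

variable {m c v : ℝ → ℝ} {lam s K₁ K₂ A : ℝ}

theorem integral_deriv_sq_le (hm : ContDiff ℝ 2 m) (hc : Continuous c)
    (hv : IsPrincipalEigenfunction m c lam s v) (hs : 0 ≤ s)
    (hm' : ∀ x ∈ Icc (0:ℝ) 1, |deriv m x| ≤ K₁)
    (hm'' : ∀ x ∈ Icc (0:ℝ) 1, |deriv (deriv m) x| ≤ K₂)
    (hcA : ∀ x ∈ Icc (0:ℝ) 1, |c x| ≤ A) (hlam : lam ≤ A) :
    ∫ x in (0:ℝ)..1, deriv v x ^ 2 ≤ s * K₁ * (v 0 ^ 2 + v 1 ^ 2) + s * K₂ + 2 * A := by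
  obtain ⟨hv2, -, hode, hb0, hb1, hv1⟩ := hv
  have hm1 : ContDiff ℝ 1 (deriv m) := hm.iterate_deriv' 1 1
  have hq : Continuous fun x => s ^ 2 * deriv m x ^ 2 + s * deriv (deriv m) x + c x := by
    have := hm1.continuous
    have := hm1.continuous_deriv le_rfl
    fun_prop
  have hpot : -(s * K₂ + A) ≤ ∫ x in (0:ℝ)..1,
      (s ^ 2 * deriv m x ^ 2 + s * deriv (deriv m) x + c x) * v x ^ 2 :=
    le_integral_mul_of_le (hv2.continuous.pow 2) hq (fun x => sq_nonneg (v x)) hv1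
      fun x hx => by
        have hm''x := (abs_le.1 (hm'' x hx)).1
        have hcx := (abs_le.1 (hcA x hx)).1
        nlinarith [sq_nonneg (s * deriv m x)]
  have hbdry : v 1 * deriv v 1 - v 0 * deriv v 0 ≤ s * K₁ * (v 0 ^ 2 + v 1 ^ 2) := by
    have h0 := neg_le_of_abs_le (hm' 0 ⟨le_rfl, zero_le_one⟩)
    have h1 := le_of_abs_le (hm' 1 ⟨zero_le_one, le_rfl⟩)
    rw [hb0, hb1]
    nlinarith [mul_nonneg (mul_nonneg hs (sq_nonneg (v 0))) (neg_le_iff_add_nonneg.1 h0),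
      mul_nonneg (mul_nonneg hs (sq_nonneg (v 1))) (sub_nonneg.2 h1)]
  rw [integral_deriv_sq_eq_of_eigen hv2 hq hode hv1]
  linarith

theorem sq_le (hm : ContDiff ℝ 2 m) (hc : Continuous c)
    (hv : IsPrincipalEigenfunction m c lam s v) (hs : 1 ≤ s)
    (hm' : ∀ x ∈ Icc (0:ℝ) 1, |deriv m x| ≤ K₁)
    (hm'' : ∀ x ∈ Icc (0:ℝ) 1, |deriv (deriv m) x| ≤ K₂)
    (hcA : ∀ x ∈ Icc (0:ℝ) 1, |c x| ≤ A) (hlam : lam ≤ A) :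
    ∀ x ∈ Icc (0:ℝ) 1, v x ^ 2 ≤ (1 + 2 * √(4 * K₁ + 16 * K₁ ^ 2 + 2 * K₂ + 4 * A)) * s := by
  have h0 : (0:ℝ) ∈ Icc (0:ℝ) 1 := ⟨le_rfl, zero_le_one⟩
  have h1 : (1:ℝ) ∈ Icc (0:ℝ) 1 := ⟨zero_le_one, le_rfl⟩
  have hK₁ : 0 ≤ K₁ := (abs_nonneg _).trans (hm' 0 h0)
  have hK₂ : 0 ≤ K₂ := (abs_nonneg _).trans (hm'' 0 h0)
  have hA : 0 ≤ A := (abs_nonneg _).trans (hcA 0 h0)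
  have hpt := fun x (hx : x ∈ Icc (0:ℝ) 1) =>
    sq_le_one_add_two_mul_sqrt_of_integral_sq_eq_one (hv.1.of_le (by norm_num)) hv.2.2.2.2.2 hx
  have hE := hv.integral_deriv_sq_le hm hc (by linarith) hm' hm'' hcA hlam
  set E := ∫ x in (0:ℝ)..1, deriv v x ^ 2
  have hE0 : 0 ≤ E := intervalIntegral.integral_nonneg zero_le_one fun y _ => sq_nonneg _
  have hEs : E ≤ s ^ 2 * (4 * K₁ + 16 * K₁ ^ 2 + 2 * K₂ + 4 * A) := by
    have hsK : 0 ≤ s * K₁ := by positivity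
    have hss : s ≤ s ^ 2 := by nlinarith
    -- the cross term `4 s K₁ √E` is absorbed via `8 s K₁ √E ≤ E + 16 s² K₁²`
    nlinarith [mul_le_mul_of_nonneg_left (hpt 0 h0) hsK,
      mul_le_mul_of_nonneg_left (hpt 1 h1) hsK,
      sq_nonneg (√E - 4 * s * K₁), Real.sq_sqrt hE0, mul_le_mul_of_nonneg_left hss hK₁,
      mul_le_mul_of_nonneg_left hss hK₂,
      mul_le_mul_of_nonneg_left (one_le_pow₀ hs : 1 ≤ s ^ 2) hA]
  have hsqrt : √E ≤ s * √(4 * K₁ + 16 * K₁ ^ 2 + 2 * K₂ + 4 * A) := by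
    rw [← Real.sqrt_sq (by linarith : 0 ≤ s), ← Real.sqrt_mul (sq_nonneg s)]
    exact Real.sqrt_le_sqrt hEs
  intro x hx
  nlinarith [hpt x hx, Real.sqrt_nonneg (4 * K₁ + 16 * K₁ ^ 2 + 2 * K₂ + 4 * A)]

end IsPrincipalEigenfunction

theorem eigenfunction_sup_le_sqrt_general
    (m c : ℝ → ℝ) (hm : ContDiff ℝ 2 m) (hc : Continuous c) :
    ∃ M > (0:ℝ), ∀ s ≥ (1:ℝ), ∀ v : ℝ → ℝ,
      IsPrincipalEigenfunction m c (lambdaN m c s) s v →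
      ∀ x ∈ Set.Icc (0:ℝ) 1, v x ≤ M * Real.sqrt s := by
  have hm1 : ContDiff ℝ 1 (deriv m) := hm.iterate_deriv' 1 1
  obtain ⟨K₁, hK₁⟩ : ∃ K, ∀ x ∈ Icc (0:ℝ) 1, |deriv m x| ≤ K :=
    isCompact_Icc.exists_bound_of_continuousOn hm1.continuous.continuousOn
  obtain ⟨K₂, hK₂⟩ : ∃ K, ∀ x ∈ Icc (0:ℝ) 1, |deriv (deriv m) x| ≤ K :=
    isCompact_Icc.exists_bound_of_continuousOn (hm1.continuous_deriv le_rfl).continuousOn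
  obtain ⟨A, hA⟩ : ∃ A, ∀ x ∈ Icc (0:ℝ) 1, |c x| ≤ A :=
    isCompact_Icc.exists_bound_of_continuousOn hc.continuousOn
  refine ⟨√(1 + 2 * √(4 * K₁ + 16 * K₁ ^ 2 + 2 * K₂ + 4 * A)), by positivity,
    fun s hs v hv x hx => ?_⟩
  have hlam : lambdaN m c s ≤ A :=
    lambdaN_le_of_forall_le hm.continuous hc s fun x hx => (le_abs_self _).trans (hA x hx)
  rw [← Real.sqrt_mul (by positivity)]
  exact (le_abs_self _).trans (Real.abs_le_sqrt (hv.sq_le hm hc hs hK₁ hK₂ hA hlam x hx))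

/-- Lemma 3.1: under the normalization
`‖m'‖_∞ + ‖m''‖_∞ + max c − min c ≤ 1/2`, there is `M > 0` such that every
principal eigenfunction satisfies `max_{[0,1]} w(s,·) ≤ M s^{1/2}` for all `s ≥ 1`. -/
theorem eigenfunction_sup_le_sqrt
    (m c : ℝ → ℝ) (hm : ContDiff ℝ 2 m) (hc : Continuous c)
    (hnorm : sSup ((fun x => |deriv m x|) '' Set.Icc (0:ℝ) 1) +
             sSup ((fun x => |deriv (deriv m) x|) '' Set.Icc (0:ℝ) 1) +
             (sSup (c '' Set.Icc (0:ℝ) 1) - sInf (c '' Set.Icc (0:ℝ) 1)) ≤ 1/2) :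
    ∃ M > (0:ℝ), ∀ s ≥ (1:ℝ), ∀ v : ℝ → ℝ,
      IsPrincipalEigenfunction m c (lambdaN m c s) s v →
      ∀ x ∈ Set.Icc (0:ℝ) 1, v x ≤ M * Real.sqrt s :=
  eigenfunction_sup_le_sqrt_general m c hm hc
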